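/- arXiv:2603.03867 — 4 statements merged into one kernel-verified Lean document; each statement's English description precedes it below -/
import Mathlib

section
/- For the sensitive star graph with one blue center and n peripheral nodes of which a fraction p are blue, the assortativity with respect to the sensitive attribute equals a = −(1−p)/(p+1). -/
open Finset
open scoped Classical

/-- Vertices of the sensitive star graph: `none` is the blue center,
`some i` the peripheral nodes. -/
abbrev Vstar (n : ℕ) := Option (Fin n)

/-- The star graph: the center is adjacent to every peripheral node. -/
def Gstar (n : ℕ) : SimpleGraph (Vstar n) :=
  SimpleGraph.fromRel (fun x _ => x = none)

/-- Colors: the center is blue (`false`); peripheral node `i` is blue iff `i < m`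
(so `m` peripheral nodes are blue and `n − m` are red (`true`)). -/
def Sstar (n m : ℕ) : Vstar n → Bool
  | none => false
  | some i => decide (m ≤ i.val)

/-- Mixing matrix of a colored graph: `(mixM G S) s s'` is the fraction of (ordered)
adjacent pairs whose endpoints have colors `(s, s')`.  Its diagonal entry `s s` is the
fraction of edges joining group `s` to itself, and each off-diagonal entry is half the
fraction of inter-group edges. -/
noncomputable def mixM {V : Type*} [Fintype V] (G : SimpleGraph V) (S : V → Bool) :
    Matrix Bool Bool ℝ :=
  Matrix.of fun s s' =>
    ((Finset.univ.filter
        (fun p : V × V => G.Adj p.1 p.2 ∧ S p.1 = s ∧ S p.2 = s')).card : ℝ) /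
      ((Finset.univ.filter (fun p : V × V => G.Adj p.1 p.2)).card : ℝ)

/-- Sum of all entries of `e²`. -/
noncomputable def sumSq (e : Matrix Bool Bool ℝ) : ℝ := ∑ i, ∑ j, (e * e) i j

/-- Assortativity with respect to the sensitive attribute:
`a = (Tr(e) − Σe²)/(1 − Σe²)`. -/
noncomputable def assort {V : Type*} [Fintype V] (G : SimpleGraph V) (S : V → Bool) : ℝ :=
  ((mixM G S).trace - sumSq (mixM G S)) / (1 - sumSq (mixM G S))

/-!
Every edge of the star joins the blue center to a leaf, so with `p = m / n` the mixing matrix is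
`e = !![p, (1 - p) / 2; (1 - p) / 2, 0]`. Hence `Tr e = p` and `Σe² = ((1 + p)² + (1 - p)²) / 4 = (1 + p²) / 2`,
and `a = (p - (1 + p²) / 2) / (1 - (1 + p²) / 2) = -(1 - p)² / ((1 - p) (1 + p))`.
-/

lemma gstar_adj {n : ℕ} {x y : Vstar n} :
    (Gstar n).Adj x y ↔ x ≠ y ∧ (x = none ∨ y = none) := by
  simp [Gstar, SimpleGraph.fromRel_adj]

lemma card_filter_gstar_adj (n : ℕ) (R : Vstar n × Vstar n → Prop) [DecidablePred R] :
    #{p | (Gstar n).Adj p.1 p.2 ∧ R p} = #{i | R (none, some i)} + #{i | R (some i, none)} := by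
  simp only [card_filter, Fintype.sum_prod_type, Fintype.sum_option, gstar_adj]
  simp

lemma card_gstar_adj (n : ℕ) : #{p : Vstar n × Vstar n | (Gstar n).Adj p.1 p.2} = 2 * n := by
  simpa [two_mul] using card_filter_gstar_adj n (fun _ => True)

lemma card_sstar_false {n m : ℕ} (h : m ≤ n) : #{i : Fin n | Sstar n m (some i) = false} = m := by
  simpa [Sstar, h] using Fin.card_filter_val_lt (n := n) (m := m)

lemma card_sstar_true {n m : ℕ} (h : m ≤ n) :
    #{i : Fin n | Sstar n m (some i) = true} = n - m := by
  have := card_filter_add_card_filter_not (s := (univ : Finset (Fin n)))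
    (fun i => Sstar n m (some i) = false)
  simp only [Bool.not_eq_false, card_sstar_false h, card_univ, Fintype.card_fin] at this
  omega

lemma mixM_gstar_apply (n : ℕ) (S : Vstar n → Bool) (s s' : Bool) :
    mixM (Gstar n) S s s' =
      ((if S none = s then #{i | S (some i) = s'} else 0) +
        (if S none = s' then #{i | S (some i) = s} else 0) : ℕ) / (2 * n : ℝ) := by
  rw [mixM, Matrix.of_apply, card_filter_gstar_adj, card_gstar_adj]
  push_cast
  split_ifs <;> simp_all

section

variable {n m : ℕ}

@[simp]
lemma sstar_none : Sstar n m none = false := rfl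

lemma mixM_gstar_sstar_false_false (h : m ≤ n) :
    mixM (Gstar n) (Sstar n m) false false = m / n := by
  simp only [mixM_gstar_apply, sstar_none, ↓reduceIte, card_sstar_false h, Nat.cast_add]
  ring

lemma mixM_gstar_sstar_false_true (h : m < n) :
    mixM (Gstar n) (Sstar n m) false true = (1 - m / n) / 2 := by
  have hn : (n : ℝ) ≠ 0 := Nat.cast_ne_zero.mpr (Nat.ne_zero_of_lt h)
  simp only [mixM_gstar_apply, sstar_none, ↓reduceIte, card_sstar_true h.le, Bool.false_eq_true,
    add_zero, Nat.cast_sub h.le]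
  field_simp

lemma mixM_gstar_sstar_true_false (h : m < n) :
    mixM (Gstar n) (Sstar n m) true false = (1 - m / n) / 2 := by
  have hn : (n : ℝ) ≠ 0 := Nat.cast_ne_zero.mpr (Nat.ne_zero_of_lt h)
  simp only [mixM_gstar_apply, sstar_none, Bool.false_eq_true, ↓reduceIte, card_sstar_true h.le,
    zero_add, Nat.cast_sub h.le]
  field_simp

lemma mixM_gstar_sstar_true_true : mixM (Gstar n) (Sstar n m) true true = 0 := by
  simp [mixM_gstar_apply]

end

lemma trace_sub_sumSq_div_of_apply (e : Matrix Bool Bool ℝ) (p : ℝ) (hff : e false false = p)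
    (hft : e false true = (1 - p) / 2) (htf : e true false = (1 - p) / 2)
    (htt : e true true = 0) :
    (e.trace - sumSq e) / (1 - sumSq e) = -((1 - p) / (p + 1)) := by
  have htrace : e.trace = p := by simp [Matrix.trace, hff, htt]
  have hsumSq : sumSq e = (1 + p ^ 2) / 2 := by
    simp only [sumSq, Matrix.mul_apply, Fintype.sum_bool, hff, hft, htf, htt]
    ring
  rw [htrace, hsumSq, show p - (1 + p ^ 2) / 2 = -((1 - p) * (1 - p)) / 2 by ring,
    show 1 - (1 + p ^ 2) / 2 = (1 - p) * (p + 1) / 2 by ring]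
  -- at `p = 1` both sides are `0`, the left one as `0 / 0`
  rcases eq_or_ne p 1 with rfl | hp
  · norm_num
  rw [div_div_div_cancel_right₀ two_ne_zero, neg_div,
    mul_div_mul_left _ _ (sub_ne_zero.mpr hp.symm)]

theorem stmt3_general (n m : ℕ) (hmn : m < n) :
    assort (Gstar n) (Sstar n m) =
      -((1 - (m : ℝ) / n) / ((m : ℝ) / n + 1)) :=
  trace_sub_sumSq_div_of_apply _ _ (mixM_gstar_sstar_false_false hmn.le)
    (mixM_gstar_sstar_false_true hmn) (mixM_gstar_sstar_true_false hmn)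
    mixM_gstar_sstar_true_true

/-- for the sensitive star graph with one blue center and `n` peripheral
nodes of which `m = np` are blue (`p = m/n`), the assortativity with respect to the
sensitive attribute equals `a = −(1 − p)/(p + 1)`. -/
theorem stmt3 (n m : ℕ) (hm : 0 < m) (hmn : m < n) :
    assort (Gstar n) (Sstar n m) =
      -((1 - (m : ℝ) / n) / ((m : ℝ) / n + 1)) :=
  stmt3_general n m hmn
end

section
/- For toy graph (b) — blue bridge node b adjacent to red bridge node r, with n blue leaves on b each of which additionally carries one red pendant node, and symmetrically n red leaves on r each carrying one blue pendant node — the 1-hop structural bias equals NB^(1) = (n²+1)/((n+1)(2n+1)). -/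
/-!
Every vertex of toy graph (b) has a neighbour, so `φ^(1)_{x→x}` is the plain average, over
the `2n + 1` vertices of color `x`, of the fraction of same-colored neighbours: `n/(n+1)` at
the bridge, `1/2` at each of the `n` leaves and `0` at each of the `n` pendants. Hence
`φ_{0→0} = φ_{1→1} = (n/(n+1) + n/2)/(2n+1)`, and `2φ − 1 = −(n² + 1)/((n+1)(2n+1))`.
-/

open Finset
open scoped Classical

/-- The set of nodes at shortest-path distance exactly `k` from `v`. -/
noncomputable def Nk {V : Type*} [Fintype V] (G : SimpleGraph V) (k : ℕ) (v : V) : Finset V :=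
  Finset.univ.filter (fun w => G.dist v w = k)

/-- Nodes of sensitive group `s` having a nonempty `k`-hop neighborhood. -/
noncomputable def Vk {V : Type*} [Fintype V] (G : SimpleGraph V) (S : V → Bool) (k : ℕ)
    (s : Bool) : Finset V :=
  Finset.univ.filter (fun v => S v = s ∧ (Nk G k v).Nonempty)

/-- `k`-hop group exposure: average over group-`s` nodes (with nonempty `k`-hop
neighborhood) of the fraction of their `k`-hop neighbors in group `s'`. -/
noncomputable def phi {V : Type*} [Fintype V] (G : SimpleGraph V) (S : V → Bool) (k : ℕ)
    (s s' : Bool) : ℝ :=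
  (∑ v ∈ Vk G S k s,
      (((Nk G k v).filter (fun w => S w = s')).card : ℝ) / ((Nk G k v).card : ℝ)) /
    ((Vk G S k s).card : ℝ)

/-- Binary-attribute `k`-hop structural bias `NB^(k) = |φ_{0→0} + φ_{1→1} − 1|`. -/
noncomputable def NB {V : Type*} [Fintype V] (G : SimpleGraph V) (S : V → Bool) (k : ℕ) : ℝ :=
  |phi G S k false false + phi G S k true true - 1|

/-- Vertices of toy graph (b): `Sum.inl x` is the bridge node of color `x`
(`false` = blue, `true` = red); `Sum.inr (o, i, false)` is the `i`-th level-1 leaf on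
the side of the bridge of color `o` (it has color `o`); `Sum.inr (o, i, true)` is the
pendant node attached to that leaf (it has the opposite color `!o`). -/
abbrev Vb (n : ℕ) := Bool ⊕ (Bool × Fin n × Bool)

def relB (n : ℕ) : Vb n → Vb n → Prop
  | Sum.inl _, Sum.inl _ => True
  | Sum.inl x, Sum.inr p => x = p.1 ∧ p.2.2 = false
  | Sum.inr p, Sum.inr q => p.1 = q.1 ∧ p.2.1 = q.2.1 ∧ p.2.2 = false ∧ q.2.2 = true
  | _, _ => False

/-- Toy graph (b). -/
def Gb (n : ℕ) : SimpleGraph (Vb n) := SimpleGraph.fromRel (relB n)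

/-- Colors in toy graph (b). -/
def Sb (n : ℕ) : Vb n → Bool
  | Sum.inl x => x
  | Sum.inr p => if p.2.2 then !p.1 else p.1


section General

variable {V : Type*} [Fintype V] (G : SimpleGraph V) (S : V → Bool)

lemma Nk_one (v : V) : Nk G 1 v = G.neighborFinset v := by
  ext w
  simp [Nk, SimpleGraph.dist_eq_one_iff_adj]

noncomputable def neighborFrac (s' : Bool) (v : V) : ℝ :=
  (#((G.neighborFinset v).filter (fun w => S w = s')) : ℝ) / #(G.neighborFinset v)

lemma phi_one_eq_of_forall_not_isIsolated (hG : ∀ v, ¬G.IsIsolated v)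
    (s s' : Bool) :
    phi G S 1 s s' =
      (∑ v ∈ univ.filter (fun v => S v = s), neighborFrac G S s' v) /
        #(univ.filter (fun v => S v = s)) := by
  have hVk : Vk G S 1 s = univ.filter (fun v => S v = s) := by
    ext v
    simp [Vk, Nk_one, hG v]
  simp only [phi, hVk, Nk_one, neighborFrac]

end General

section ToyGraphB

variable (n : ℕ)

lemma Gb_adj_iff (u v : Vb n) : (Gb n).Adj u v ↔ u ≠ v ∧ (relB n u v ∨ relB n v u) :=
  SimpleGraph.fromRel_adj _ u v

lemma Gb_neighborFinset_bridge (x : Bool) :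
    (Gb n).neighborFinset (Sum.inl x) =
      insert (Sum.inl (!x)) (univ.image fun i => Sum.inr (x, i, false)) := by
  ext w
  rcases w with y | ⟨o, i, t⟩
  · cases x <;> cases y <;> simp [Gb_adj_iff, relB]
  · cases t <;> cases x <;> cases o <;> simp [Gb_adj_iff, relB]

lemma Gb_neighborFinset_leaf (o : Bool) (i : Fin n) :
    (Gb n).neighborFinset (Sum.inr (o, i, false)) = {Sum.inl o, Sum.inr (o, i, true)} := by
  ext w
  rcases w with y | ⟨o', i', t⟩
  · cases o <;> cases y <;> simp [Gb_adj_iff, relB]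
  · cases t <;> cases o <;> cases o' <;> simp [Gb_adj_iff, relB, eq_comm]

lemma Gb_neighborFinset_pendant (o : Bool) (i : Fin n) :
    (Gb n).neighborFinset (Sum.inr (o, i, true)) = {Sum.inr (o, i, false)} := by
  ext w
  rcases w with y | ⟨o', i', t⟩
  · simp [Gb_adj_iff, relB]
  · cases t <;> cases o <;> cases o' <;> simp [Gb_adj_iff, relB, eq_comm]

lemma Gb_not_isIsolated (v : Vb n) : ¬(Gb n).IsIsolated v := by
  rcases v with x | ⟨o, i, _ | _⟩
  · exact SimpleGraph.Adj.not_isIsolated_left (v := Sum.inl (!x))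
      (by cases x <;> simp [Gb_adj_iff, relB])
  · exact SimpleGraph.Adj.not_isIsolated_left (v := Sum.inl o) (by simp [Gb_adj_iff, relB])
  · exact SimpleGraph.Adj.not_isIsolated_left (v := Sum.inr (o, i, false))
      (by simp [Gb_adj_iff, relB])

lemma Gb_sum_filter_color {M : Type*} [AddCommMonoid M] (x : Bool) (f : Vb n → M) :
    ∑ v ∈ univ.filter (fun v => Sb n v = x), f v =
      f (Sum.inl x) + ∑ i, f (Sum.inr (x, i, false)) + ∑ i, f (Sum.inr (!x, i, true)) := by
  rw [sum_filter, Fintype.sum_sum_type]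
  simp only [Fintype.sum_prod_type, Fintype.sum_bool]
  cases x <;> simp [Sb] <;> abel

lemma Gb_card_filter_color (x : Bool) : #(univ.filter (fun v => Sb n v = x)) = 2 * n + 1 := by
  rw [card_eq_sum_ones, Gb_sum_filter_color]
  simp only [sum_const, card_univ, Fintype.card_fin, smul_eq_mul, mul_one]
  ring

lemma neighborFrac_Gb_bridge (x : Bool) :
    neighborFrac (Gb n) (Sb n) x (Sum.inl x) = n / (n + 1) := by
  have hsame : (univ.image fun i => Sum.inr (x, i, false) : Finset (Vb n)).filter
      (fun w => Sb n w = x) = univ.image fun i => Sum.inr (x, i, false) :=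
    filter_true_of_mem (by simp [Sb])
  rw [neighborFrac, Gb_neighborFinset_bridge, filter_insert, if_neg (by simp [Sb]), hsame,
    card_insert_of_notMem (by simp), card_image_of_injective _ (fun i j h => by simpa using h)]
  simp

lemma neighborFrac_Gb_leaf (o : Bool) (i : Fin n) :
    neighborFrac (Gb n) (Sb n) o (Sum.inr (o, i, false)) = 1 / 2 := by
  rw [neighborFrac, Gb_neighborFinset_leaf, filter_insert, filter_singleton]
  simp [Sb]

lemma neighborFrac_Gb_pendant (x : Bool) (i : Fin n) :
    neighborFrac (Gb n) (Sb n) x (Sum.inr (!x, i, true)) = 0 := by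
  rw [neighborFrac, Gb_neighborFinset_pendant, filter_singleton]
  simp [Sb]

lemma phi_Gb_one_self (x : Bool) :
    phi (Gb n) (Sb n) 1 x x = (n / (n + 1) + n / 2) / (2 * n + 1) := by
  rw [phi_one_eq_of_forall_not_isIsolated _ _ (Gb_not_isIsolated n), Gb_sum_filter_color,
    Gb_card_filter_color]
  simp only [neighborFrac_Gb_bridge, neighborFrac_Gb_leaf, neighborFrac_Gb_pendant, sum_const,
    card_univ, Fintype.card_fin, nsmul_eq_mul]
  push_cast
  ring

end ToyGraphB

theorem stmt7_general (n : ℕ) :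
    NB (Gb n) (Sb n) 1 =
      ((n : ℝ) ^ 2 + 1) / (((n : ℝ) + 1) * (2 * (n : ℝ) + 1)) := by
  have hexposure : phi (Gb n) (Sb n) 1 false false + phi (Gb n) (Sb n) 1 true true - 1 =
      -(((n : ℝ) ^ 2 + 1) / (((n : ℝ) + 1) * (2 * (n : ℝ) + 1))) := by
    rw [phi_Gb_one_self, phi_Gb_one_self]
    field_simp
    ring
  rw [NB, hexposure, abs_neg, abs_of_nonneg (by positivity)]

/-- for toy graph (b) — blue bridge adjacent to red bridge, `n` blue
leaves on the blue bridge each carrying one red pendant, and symmetrically on the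
red side — the 1-hop structural bias equals `NB^(1) = (n² + 1)/((n+1)(2n+1))`. -/
theorem stmt7 (n : ℕ) (hn : 0 < n) :
    NB (Gb n) (Sb n) 1 =
      ((n : ℝ) ^ 2 + 1) / (((n : ℝ) + 1) * (2 * (n : ℝ) + 1)) :=
  stmt7_general n
end

section
/- For toy graph (b), the 2-hop structural bias equals NB^(2) = 3/(2n+1) and the 3-hop structural bias equals NB^(3) = (2n−3)/(2n+1). In particular NB^(3) → 1 as n → ∞. -/
open Finset
open scoped Classical

/-!
Toy graph (b) is a tree, so its distances are explicit. At distance 2 a bridge sees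
only vertices of the other colour, a leaf sees the opposite bridge and its `n - 1` sibling leaves,
and a pendant sees only its own bridge, so each colour class (of size `2n + 1`) has total
self-exposure `n - 1`. At distance 3 a bridge sees only the opposite pendants, which share its
colour, a leaf sees only the other colour, and a pendant sees the 2-hop neighbourhood of its leaf,
of which only the opposite bridge shares its colour; the total self-exposure is
`1 + 0 + n · (1/n) = 2`.
Hence `NB^(2) = |2(n - 1)/(2n + 1) - 1|` and `NB^(3) = |4/(2n + 1) - 1|`.
-/

namespace SimpleGraph

variable {V : Type*} {G : SimpleGraph V}

theorem Walk.le_add_length_of_adj_le {f : V → ℕ} (hf : ∀ a b, G.Adj a b → f b ≤ f a + 1)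
    {u v : V} (p : G.Walk u v) : f v ≤ f u + p.length := by
  induction p with
  | nil => simp
  | cons h _ ih => have := hf _ _ h; rw [Walk.length_cons]; omega

theorem exists_walk_length_eq_of_descent {u : V} {f : V → ℕ} (hzero : ∀ v, f v = 0 → v = u)
    (hdesc : ∀ v, f v ≠ 0 → ∃ w, G.Adj w v ∧ f w + 1 = f v) (v : V) :
    ∃ p : G.Walk u v, p.length = f v := by
  induction hv : f v generalizing v with
  | zero => obtain rfl := hzero v hv; exact ⟨.nil, rfl⟩
  | succ m ih =>
    obtain ⟨w, hwv, hw⟩ := hdesc v (by omega)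
    obtain ⟨p, hp⟩ := ih w (by omega)
    exact ⟨p.concat hwv, by rw [Walk.length_concat, hp]⟩

theorem dist_eq_of_descent {u : V} {f : V → ℕ} (hu : f u = 0) (hzero : ∀ v, f v = 0 → v = u)
    (hadj : ∀ a b, G.Adj a b → f b ≤ f a + 1)
    (hdesc : ∀ v, f v ≠ 0 → ∃ w, G.Adj w v ∧ f w + 1 = f v) (v : V) :
    G.dist u v = f v := by
  obtain ⟨p, hp⟩ := exists_walk_length_eq_of_descent hzero hdesc v
  obtain ⟨q, hq⟩ := p.reachable.exists_walk_length_eq_dist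
  have := q.le_add_length_of_adj_le hadj
  have := dist_le p
  omega

end SimpleGraph

section Exposure

variable {V : Type*} [Fintype V] {G : SimpleGraph V} {S : V → Bool} {k : ℕ}

noncomputable def exposure (G : SimpleGraph V) (S : V → Bool) (k : ℕ) (v : V) (s' : Bool) :
    ℝ :=
  (((Nk G k v).filter (fun w => S w = s')).card : ℝ) / ((Nk G k v).card : ℝ)

theorem phi_eq_of_forall_nonempty (h : ∀ v, (Nk G k v).Nonempty) (s s' : Bool) :
    phi G S k s s' = (∑ v ∈ univ.filter (fun v => S v = s), exposure G S k v s') /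
      ((univ.filter (fun v => S v = s)).card : ℝ) := by
  have hV : Vk G S k s = univ.filter (fun v => S v = s) := by simp only [Vk, h, and_true]
  rw [phi, hV]
  rfl

theorem exposure_eq_zero_of_forall_ne {v : V} {s' : Bool} (h : ∀ w ∈ Nk G k v, S w ≠ s') :
    exposure G S k v s' = 0 := by
  rw [exposure, filter_false_of_mem h, card_empty, Nat.cast_zero, zero_div]

theorem exposure_eq_one_of_forall_eq {v : V} {s' : Bool} (hne : (Nk G k v).Nonempty)
    (h : ∀ w ∈ Nk G k v, S w = s') : exposure G S k v s' = 1 := by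
  rw [exposure, filter_true_of_mem h]
  exact div_self (by exact_mod_cast hne.card_pos.ne')

end Exposure

namespace Gb

open SimpleGraph Sum Filter Topology

variable {n : ℕ}

theorem adj_inl_inl {x y : Bool} : (Gb n).Adj (inl x) (inl y) ↔ x ≠ y := by
  simp [Gb, relB]

theorem adj_inl_inr {x o : Bool} {i : Fin n} {c : Bool} :
    (Gb n).Adj (inl x) (inr (o, i, c)) ↔ x = o ∧ c = false := by
  simp [Gb, relB]

theorem adj_inr_inl {x o : Bool} {i : Fin n} {c : Bool} :
    (Gb n).Adj (inr (o, i, c)) (inl x) ↔ x = o ∧ c = false := by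
  rw [adj_comm, adj_inl_inr]

theorem adj_inr_inr {o o' : Bool} {i i' : Fin n} {c c' : Bool} :
    (Gb n).Adj (inr (o, i, c)) (inr (o', i', c')) ↔ o = o' ∧ i = i' ∧ c ≠ c' := by
  simp only [Gb, fromRel_adj, relB]
  grind

/-- `level c` is the depth of `inr (o, i, c)` below the bridge `inl o`; vertices on different
branches are joined through the bridges. -/
def level (c : Bool) : ℕ := if c then 2 else 1

def treeDist (n : ℕ) : Vb n → Vb n → ℕ
  | inl x, inl y => if x = y then 0 else 1
  | inl x, inr (o, _, c) => level c + (if x = o then 0 else 1)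
  | inr (o, _, c), inl y => level c + (if y = o then 0 else 1)
  | inr (o, i, c), inr (o', i', c') =>
      if o = o' then (if i = i' then (if c = c' then 0 else 1) else level c + level c')
      else level c + level c' + 1

theorem treeDist_self (v : Vb n) : treeDist n v v = 0 := by
  rcases v with x | ⟨o, i, c⟩ <;> simp [treeDist]

theorem eq_of_treeDist_eq_zero {u v : Vb n} (h : treeDist n u v = 0) : v = u := by
  rcases u with x | ⟨o, i, c⟩ <;> rcases v with y | ⟨o', i', c'⟩ <;>
    simp_all [treeDist, level] <;> grind

theorem treeDist_le_of_adj (u : Vb n) {a b : Vb n} (h : (Gb n).Adj a b) :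
    treeDist n u b ≤ treeDist n u a + 1 := by
  rcases a with x | ⟨o, i, c⟩ <;> rcases b with y | ⟨o', i', c'⟩ <;>
    rcases u with z | ⟨p, j, e⟩ <;>
    simp only [adj_inl_inl, adj_inl_inr, adj_inr_inl, adj_inr_inr] at h <;>
    grind [treeDist, level]

theorem exists_adj_treeDist_succ (u : Vb n) {v : Vb n} (hv : treeDist n u v ≠ 0) :
    ∃ w, (Gb n).Adj w v ∧ treeDist n u w + 1 = treeDist n u v := by
  rcases u with x | ⟨o, i, c⟩ <;> rcases v with y | ⟨o', i', c'⟩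
  · exact ⟨inl x, by grind [adj_inl_inl, treeDist]⟩
  · cases c'
    · exact ⟨inl o', by grind [adj_inl_inr, treeDist, level]⟩
    · exact ⟨inr (o', i', false), by grind [adj_inr_inr, treeDist, level]⟩
  · by_cases hy : y = o
    · exact ⟨inr (o, i, false), by grind [adj_inr_inl, treeDist, level]⟩
    · exact ⟨inl o, by grind [adj_inl_inl, treeDist, level]⟩
  · cases c'
    · by_cases h : o = o' ∧ i = i'
      · exact ⟨inr (o', i', true), by grind [adj_inr_inr, treeDist, level]⟩
      · exact ⟨inl o', by grind [adj_inl_inr, treeDist, level]⟩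
    · exact ⟨inr (o', i', false), by grind [adj_inr_inr, treeDist, level]⟩

theorem dist_eq_treeDist (u v : Vb n) : (Gb n).dist u v = treeDist n u v :=
  dist_eq_of_descent (treeDist_self u) (fun _ => eq_of_treeDist_eq_zero)
    (fun _ _ => treeDist_le_of_adj u) (fun _ => exists_adj_treeDist_succ u) v

theorem mem_Nk {k : ℕ} {v w : Vb n} : w ∈ Nk (Gb n) k v ↔ treeDist n v w = k := by
  simp [Nk, dist_eq_treeDist]

def siblings (o : Bool) (i : Fin n) : Finset (Vb n) :=
  (univ.erase i).image fun j => inr (o, j, false)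

theorem card_siblings (o : Bool) (i : Fin n) : (siblings o i).card = n - 1 := by
  rw [siblings, card_image_of_injective _ (fun j j' h => by simpa using h), card_erase_of_mem
    (mem_univ i), card_univ, Fintype.card_fin]

theorem Nk_two_leaf (o : Bool) (i : Fin n) :
    Nk (Gb n) 2 (inr (o, i, false)) = insert (inl !o) (siblings o i) := by
  ext (x | ⟨o', j, c⟩) <;> cases o <;> simp [mem_Nk, siblings, treeDist, level] <;> grind

theorem Nk_three_pendant (o : Bool) (i : Fin n) :
    Nk (Gb n) 3 (inr (o, i, true)) = insert (inl !o) (siblings o i) := by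
  ext (x | ⟨o', j, c⟩) <;> cases o <;> simp [mem_Nk, siblings, treeDist, level] <;> grind

theorem Nk_two_nonempty (hn : 0 < n) (v : Vb n) : (Nk (Gb n) 2 v).Nonempty := by
  rcases v with x | ⟨o, i, _ | _⟩
  · exact ⟨inr (!x, ⟨0, hn⟩, false), by cases x <;> simp [mem_Nk, treeDist, level]⟩
  · exact ⟨inl (!o), by cases o <;> simp [mem_Nk, treeDist, level]⟩
  · exact ⟨inl o, by simp [mem_Nk, treeDist, level]⟩

theorem Nk_three_nonempty (hn : 0 < n) (v : Vb n) : (Nk (Gb n) 3 v).Nonempty := by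
  rcases v with x | ⟨o, i, _ | _⟩
  · exact ⟨inr (!x, ⟨0, hn⟩, true), by cases x <;> simp [mem_Nk, treeDist, level]⟩
  · exact ⟨inr (!o, i, false), by cases o <;> simp [mem_Nk, treeDist, level]⟩
  · exact ⟨inl (!o), by cases o <;> simp [mem_Nk, treeDist, level]⟩

theorem exposure_two_inl (s : Bool) : exposure (Gb n) (Sb n) 2 (inl s) s = 0 := by
  refine exposure_eq_zero_of_forall_ne ?_
  rintro (x | ⟨o, j, c⟩) <;> cases s <;> simp [mem_Nk, treeDist, level, Sb] <;> grind

theorem exposure_two_leaf (s : Bool) (i : Fin n) :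
    exposure (Gb n) (Sb n) 2 (inr (s, i, false)) s = ((n : ℝ) - 1) / n := by
  have hs : (siblings s i).filter (fun w => Sb n w = s) = siblings s i :=
    filter_true_of_mem (by simp [siblings, Sb])
  rw [exposure, Nk_two_leaf, filter_insert, if_neg (by cases s <;> simp [Sb]), hs,
    card_insert_of_notMem (by simp [siblings]), card_siblings, Nat.sub_add_cancel i.pos,
    Nat.cast_sub i.pos, Nat.cast_one]

theorem exposure_two_pendant (s : Bool) (i : Fin n) :
    exposure (Gb n) (Sb n) 2 (inr (!s, i, true)) s = 0 := by
  refine exposure_eq_zero_of_forall_ne ?_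
  rintro (x | ⟨o, j, c⟩) <;> cases s <;> simp [mem_Nk, treeDist, level, Sb] <;> grind

theorem exposure_three_inl (hn : 0 < n) (s : Bool) : exposure (Gb n) (Sb n) 3 (inl s) s = 1 := by
  refine exposure_eq_one_of_forall_eq (Nk_three_nonempty hn _) ?_
  rintro (x | ⟨o, j, c⟩) <;> cases s <;> simp [mem_Nk, treeDist, level, Sb] <;> grind

theorem exposure_three_leaf (s : Bool) (i : Fin n) :
    exposure (Gb n) (Sb n) 3 (inr (s, i, false)) s = 0 := by
  refine exposure_eq_zero_of_forall_ne ?_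
  rintro (x | ⟨o, j, c⟩) <;> cases s <;> simp [mem_Nk, treeDist, level, Sb] <;> grind

theorem exposure_three_pendant (s : Bool) (i : Fin n) :
    exposure (Gb n) (Sb n) 3 (inr (!s, i, true)) s = 1 / n := by
  have hs : (siblings (!s) i).filter (fun w => Sb n w = s) = ∅ :=
    filter_false_of_mem (by cases s <;> simp [siblings, Sb])
  rw [exposure, Nk_three_pendant, filter_insert, Bool.not_not,
    if_pos (show Sb n (inl s) = s from rfl), hs,
    card_insert_of_notMem (s := siblings _ i) (by simp [siblings]), card_siblings,
    Nat.sub_add_cancel i.pos]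
  simp

theorem sum_filter_Sb_eq (f : Vb n → ℝ) (s : Bool) :
    ∑ v ∈ univ.filter (fun v => Sb n v = s), f v =
      f (inl s) + ∑ i, f (inr (s, i, false)) + ∑ i, f (inr (!s, i, true)) := by
  simp only [sum_filter, Fintype.sum_sum_type, Fintype.sum_prod_type, Fintype.sum_bool]
  cases s <;> simp [Sb] <;> ring

theorem card_filter_Sb_eq (s : Bool) :
    ((univ.filter (fun v => Sb n v = s)).card : ℝ) = 2 * n + 1 := by
  rw [card_eq_sum_ones, Nat.cast_sum, sum_filter_Sb_eq]
  simp
  ring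

theorem phi_two (hn : 0 < n) (s : Bool) :
    phi (Gb n) (Sb n) 2 s s = ((n : ℝ) - 1) / (2 * n + 1) := by
  rw [phi_eq_of_forall_nonempty (Nk_two_nonempty hn), sum_filter_Sb_eq, card_filter_Sb_eq]
  simp only [exposure_two_inl, exposure_two_leaf, exposure_two_pendant, sum_const, card_univ,
    Fintype.card_fin, nsmul_eq_mul]
  field_simp
  ring

theorem phi_three (hn : 0 < n) (s : Bool) :
    phi (Gb n) (Sb n) 3 s s = 2 / (2 * n + 1) := by
  rw [phi_eq_of_forall_nonempty (Nk_three_nonempty hn), sum_filter_Sb_eq, card_filter_Sb_eq]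
  simp only [exposure_three_inl hn, exposure_three_leaf, exposure_three_pendant, sum_const,
    card_univ, Fintype.card_fin, nsmul_eq_mul]
  field_simp
  ring

theorem NB_two (hn : 0 < n) : NB (Gb n) (Sb n) 2 = 3 / (2 * n + 1) := by
  have h : ((n : ℝ) - 1) / (2 * n + 1) + ((n : ℝ) - 1) / (2 * n + 1) - 1 =
      -(3 / (2 * n + 1)) := by
    field_simp
    ring
  rw [NB, phi_two hn, phi_two hn, h, abs_neg, abs_of_nonneg (by positivity)]

theorem NB_three (hn : 2 ≤ n) : NB (Gb n) (Sb n) 3 = (2 * n - 3) / (2 * n + 1) := by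
  have h : 2 / (2 * (n : ℝ) + 1) + 2 / (2 * n + 1) - 1 = -((2 * n - 3) / (2 * n + 1)) := by
    field_simp
    ring
  have : (2 : ℝ) ≤ n := by exact_mod_cast hn
  rw [NB, phi_three (by omega), phi_three (by omega), h, abs_neg,
    abs_of_nonneg (div_nonneg (by linarith) (by positivity))]

theorem tendsto_NB_three : Tendsto (fun n => NB (Gb n) (Sb n) 3) atTop (𝓝 1) := by
  have hden : Tendsto (fun n : ℕ => 2 * (n : ℝ) + 1) atTop atTop :=
    tendsto_atTop_add_const_right _ 1
      (tendsto_natCast_atTop_atTop.const_mul_atTop two_pos)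
  have h : Tendsto (fun n : ℕ => 1 - 4 / (2 * (n : ℝ) + 1)) atTop (𝓝 1) := by
    simpa using tendsto_const_nhds.sub (tendsto_const_nhds.div_atTop hden)
  refine h.congr' ?_
  filter_upwards [eventually_ge_atTop 2] with n hn
  rw [NB_three hn]
  field_simp
  ring

end Gb

/-- for toy graph (b), the 2-hop structural bias equals
`NB^(2) = 3/(2n+1)` and the 3-hop structural bias equals `NB^(3) = (2n−3)/(2n+1)`;
in particular `NB^(3) → 1` as `n → ∞`. -/
theorem stmt8 :
    (∀ n : ℕ, 2 ≤ n →
      NB (Gb n) (Sb n) 2 = 3 / (2 * (n : ℝ) + 1) ∧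
      NB (Gb n) (Sb n) 3 = (2 * (n : ℝ) - 3) / (2 * (n : ℝ) + 1)) ∧
    Filter.Tendsto (fun n : ℕ => NB (Gb n) (Sb n) 3) Filter.atTop (nhds 1) :=
  ⟨fun _ hn => ⟨Gb.NB_two (by omega), Gb.NB_three hn⟩, Gb.tendsto_NB_three⟩
end

section
/- In toy graph (a), every node at distance exactly 3 from a peripheral node has: among its 3-hop neighbors, exactly n blue and n red nodes; consequently φ^(3)_{0→0} = φ^(3)_{1→1} = 1/2 and NB^(3) = 0, i.e., the graph is exactly unbiased at hop 3 for every n ≥ 1. -/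
/-!
A leaf's only neighbour is its bridge, so its distance to any other vertex is one more than
that of its bridge. A bridge is at distance at most 1 from both bridges and from its own leaves
and at distance exactly 2 from the leaves of the other bridge. Hence the 3-hop neighbourhood of a
leaf consists of the 2n leaves of the opposite bridge, n of each colour, while the bridges have
empty 3-hop neighbourhoods; every fraction entering φ^(3) is therefore 1/2.
-/

open Finset
open scoped Classical

/-- Vertices of toy graph (a): `Sum.inl x` is the bridge node of color `x`
(`false` = blue, `true` = red); `Sum.inr (o, c, i)` is the `i`-th pendant leaf of
color `c` attached to the bridge node of color `o`. -/
abbrev Va (n : ℕ) := Bool ⊕ (Bool × Bool × Fin n)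

def relA (n : ℕ) : Va n → Va n → Prop
  | Sum.inl _, Sum.inl _ => True
  | Sum.inl x, Sum.inr p => x = p.1
  | _, _ => False

/-- Toy graph (a): the two bridge nodes are adjacent, and each bridge node carries
`n` blue and `n` red pendant leaves. -/
def Ga (n : ℕ) : SimpleGraph (Va n) := SimpleGraph.fromRel (relA n)

/-- Colors in toy graph (a). -/
def Sa (n : ℕ) : Va n → Bool
  | Sum.inl x => x
  | Sum.inr p => p.2.1

namespace SimpleGraph

variable {V : Type*} {G : SimpleGraph V}

lemma dist_eq_dist_add_one_of_forall_adj_iff {u b w : V} (hu : ∀ v, G.Adj u v ↔ v = b)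
    (hw : w ≠ u) (hr : G.Reachable b w) : G.dist u w = G.dist b w + 1 := by
  have hub : G.Adj u b := (hu b).2 rfl
  apply le_antisymm
  · obtain ⟨q, hq⟩ := hr.exists_walk_length_eq_dist
    simpa [hq] using G.dist_le (.cons hub q)
  · obtain ⟨p, hp⟩ := (hub.reachable.trans hr).exists_walk_length_eq_dist
    cases p with
    | nil => exact absurd rfl hw
    | cons h q =>
      obtain rfl := (hu _).1 h
      rw [← hp, Walk.length_cons]
      exact Nat.add_le_add_right (G.dist_le q) 1

end SimpleGraph

section Exposure

variable {V : Type*} [Fintype V]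

lemma card_filter_eq_false_add_card_filter_eq_true {α : Type*} (s : Finset α) (f : α → Bool) :
    (s.filter (fun a => f a = false)).card + (s.filter (fun a => f a = true)).card = s.card := by
  simpa using s.card_filter_add_card_filter_not (fun a => f a = false)

lemma phi_eq_of_forall_mem_Vk {G : SimpleGraph V} {S : V → Bool} {k : ℕ} {s s' : Bool} {c : ℝ}
    (hne : (Vk G S k s).Nonempty)
    (h : ∀ v ∈ Vk G S k s,
      (((Nk G k v).filter (fun w => S w = s')).card : ℝ) / ((Nk G k v).card : ℝ) = c) :
    phi G S k s s' = c := by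
  have hcard : ((Vk G S k s).card : ℝ) ≠ 0 := by exact_mod_cast hne.card_pos.ne'
  rw [phi, Finset.sum_congr rfl h, Finset.sum_const, nsmul_eq_mul]
  field_simp

end Exposure

namespace Ga

open SimpleGraph

variable {n : ℕ}

lemma adj_inl_inl {x y : Bool} : (Ga n).Adj (Sum.inl x) (Sum.inl y) ↔ x ≠ y := by
  simp [Ga, relA]

lemma adj_inl_inr {x : Bool} {q : Bool × Bool × Fin n} :
    (Ga n).Adj (Sum.inl x) (Sum.inr q) ↔ q.1 = x := by
  simp [Ga, relA, eq_comm]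

lemma adj_inr (p : Bool × Bool × Fin n) (w : Va n) :
    (Ga n).Adj (Sum.inr p) w ↔ w = Sum.inl p.1 := by
  cases w <;> simp [Ga, relA, eq_comm]

lemma connected : (Ga n).Connected := by
  have hbridge : ∀ x, (Ga n).Reachable (Sum.inl false) (Sum.inl x) := by
    rintro (_ | _)
    · rfl
    · exact (adj_inl_inl.2 Bool.false_ne_true).reachable
  refine (connected_iff_exists_forall_reachable _).2 ⟨Sum.inl false, ?_⟩
  rintro (x | q)
  · exact hbridge x
  · exact (hbridge q.1).trans (adj_inl_inr.2 rfl).reachable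

lemma dist_inl_inl_le_one (x y : Bool) : (Ga n).dist (Sum.inl x) (Sum.inl y) ≤ 1 := by
  by_cases h : x = y
  · simp [h]
  · exact (dist_eq_one_iff_adj.2 (adj_inl_inl.2 h)).le

lemma dist_inl_inr (x : Bool) (q : Bool × Bool × Fin n) :
    (Ga n).dist (Sum.inl x) (Sum.inr q) = if q.1 = x then 1 else 2 := by
  split_ifs with h
  · exact dist_eq_one_iff_adj.2 (adj_inl_inr.2 h)
  · have hpath := (Ga n).dist_le
      (.cons (adj_inl_inl.2 (Ne.symm h)) (.cons (adj_inl_inr.2 rfl) .nil) :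
        (Ga n).Walk (Sum.inl x) (Sum.inr q))
    have hlow := connected.one_lt_dist_of_ne_of_not_adj Sum.inl_ne_inr (mt adj_inl_inr.1 h)
    simp only [Walk.length_cons, Walk.length_nil] at hpath
    omega

lemma Nk_three_inl (x : Bool) : Nk (Ga n) 3 (Sum.inl x) = ∅ := by
  refine Finset.filter_false_of_mem fun w _ => ?_
  cases w with
  | inl y => have := dist_inl_inl_le_one (n := n) x y; omega
  | inr q => have := dist_inl_inr x q; split_ifs at this <;> omega

lemma mem_Nk_three_inr {p : Bool × Bool × Fin n} {w : Va n} :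
    w ∈ Nk (Ga n) 3 (Sum.inr p) ↔ ∃ q : Bool × Bool × Fin n, w = Sum.inr q ∧ q.1 = !p.1 := by
  by_cases hw : w = Sum.inr p
  · subst hw
    simp [Nk]
  have hdist := dist_eq_dist_add_one_of_forall_adj_iff (adj_inr p) hw (connected.preconnected _ w)
  simp only [Nk, Finset.mem_filter, Finset.mem_univ, true_and, hdist]
  cases w with
  | inl y =>
    have := dist_inl_inl_le_one (n := n) p.1 y
    simp only [reduceCtorEq, false_and, exists_false, iff_false]
    omega
  | inr q => simp [dist_inl_inr, Bool.eq_not_iff, eq_comm]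

lemma filter_Nk_three_inr (p : Bool × Bool × Fin n) (c : Bool) :
    (Nk (Ga n) 3 (Sum.inr p)).filter (fun w => Sa n w = c) =
      Finset.univ.map ⟨fun i => Sum.inr (!p.1, c, i), fun i j h => by simpa using h⟩ := by
  ext w
  simp only [Finset.mem_filter, mem_Nk_three_inr, Finset.mem_map, Finset.mem_univ, true_and]
  constructor
  · rintro ⟨⟨⟨o, c', i⟩, rfl, ho⟩, rfl⟩
    exact ⟨i, by simp_all [Sa]⟩
  · rintro ⟨i, rfl⟩
    exact ⟨⟨_, rfl, rfl⟩, rfl⟩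

lemma card_filter_Nk_three_inr (p : Bool × Bool × Fin n) (c : Bool) :
    ((Nk (Ga n) 3 (Sum.inr p)).filter (fun w => Sa n w = c)).card = n := by
  simp [filter_Nk_three_inr]

lemma card_Nk_three_inr (p : Bool × Bool × Fin n) : (Nk (Ga n) 3 (Sum.inr p)).card = 2 * n := by
  rw [← card_filter_eq_false_add_card_filter_eq_true _ (Sa n), card_filter_Nk_three_inr,
    card_filter_Nk_three_inr, two_mul]

lemma phi_three_self (hn : 1 ≤ n) (s : Bool) : phi (Ga n) (Sa n) 3 s s = 1 / 2 := by
  have hn' : (n : ℝ) ≠ 0 := by exact_mod_cast Nat.one_le_iff_ne_zero.1 hn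
  apply phi_eq_of_forall_mem_Vk
  · refine ⟨Sum.inr (false, s, ⟨0, hn⟩), Finset.mem_filter.2 ⟨Finset.mem_univ _, rfl, ?_⟩⟩
    rw [← Finset.card_pos, card_Nk_three_inr]
    omega
  · rintro (x | p) hv
    · simp [Vk, Nk_three_inl] at hv
    · rw [card_filter_Nk_three_inr, card_Nk_three_inr]
      field_simp
      push_cast
      ring

end Ga

/-- in toy graph (a), every peripheral (pendant) node has exactly `n`
blue and `n` red nodes among its 3-hop neighbors; consequently
`φ^(3)_{0→0} = φ^(3)_{1→1} = 1/2` and `NB^(3) = 0` for every `n ≥ 1`. -/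
theorem stmt17 (n : ℕ) (hn : 1 ≤ n) :
    (∀ p : Bool × Bool × Fin n,
      ((Nk (Ga n) 3 (Sum.inr p)).filter (fun w => Sa n w = false)).card = n ∧
      ((Nk (Ga n) 3 (Sum.inr p)).filter (fun w => Sa n w = true)).card = n) ∧
    phi (Ga n) (Sa n) 3 false false = 1 / 2 ∧
    phi (Ga n) (Sa n) 3 true true = 1 / 2 ∧
    NB (Ga n) (Sa n) 3 = 0 := by
  have hphi := Ga.phi_three_self hn
  refine ⟨fun p => ⟨Ga.card_filter_Nk_three_inr p false, Ga.card_filter_Nk_three_inr p true⟩,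
    hphi false, hphi true, ?_⟩
  rw [NB, hphi, hphi]
  norm_num
end
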